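/- Let A ∈ ℂ^{m×n} have rows a_1ᴴ,…,a_mᴴ with ‖a_r‖₂ = 1 for all r. Let x̂ ∈ ℂ^n and y ∈ ℝ^m with y_r = |⟨a_r, x̂⟩|². Let σ ≥ 0 satisfy ‖A v‖₂ ≥ σ‖v‖₂ for all v ∈ ℂ^n. For x ∈ ℂ^n and each r define the simple Kaczmarz phase-retrieval update x^r = x + (√(y_r)·phase(⟨a_r, x⟩) − ⟨a_r, x⟩)·a_r. Then (1/m) Σ_{r=1}^m dist²(x^r, x̂) ≤ (1 − σ²/m)·dist²(x, x̂) + 4·max_{1≤r≤m} y_r. (One-step expected error bound for the randomized simple Kaczmarz method for phase retrieval with uniform row selection.) -/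

import Mathlib

/-! Fix a unimodular `ω` attaining `dist(x, x̂)` and put `h = x - ω x̂`. For a unit row `a`, the
step replaces the component `⟨a, h⟩` of `h` along `a` by `d = √y · phase ⟨a, x⟩ - ω ⟨a, x̂⟩`, a
difference of two numbers of modulus `√y`; hence
`dist(xʳ, x̂)² ≤ ‖xʳ - ω x̂‖² = ‖h‖² - |⟨a, h⟩|² + |d|² ≤ ‖h‖² - |⟨a, h⟩|² + 4 y`.
Averaging over the rows and using `∑ᵣ |⟨aᵣ, h⟩|² = ‖A h‖² ≥ σ² ‖h‖²` gives the bound. -/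

open scoped BigOperators ComplexConjugate

/-- phase(w) = w/|w| if w ≠ 0, else 1. -/
noncomputable def phase (w : ℂ) : ℂ := if w = 0 then 1 else w / (‖w‖ : ℂ)

/-- Euclidean norm of a complex vector. -/
noncomputable def evnorm {ι : Type*} [Fintype ι] (v : ι → ℂ) : ℝ :=
  Real.sqrt (∑ i, ‖v i‖ ^ 2)

/-- Euclidean norm of a real vector. -/
noncomputable def rvnorm {ι : Type*} [Fintype ι] (v : ι → ℝ) : ℝ :=
  Real.sqrt (∑ i, (v i) ^ 2)

/-- Standard Hermitian inner product, conjugate-linear in the first argument. -/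
noncomputable def hinner {n : ℕ} (a x : Fin n → ℂ) : ℂ := ∑ i, conj (a i) * x i

/-- dist(x, x̂) = min over unimodular ω of ‖x − ω·x̂‖₂. -/
noncomputable def pdist {n : ℕ} (x xhat : Fin n → ℂ) : ℝ :=
  ⨅ ω : {ω : ℂ // ‖ω‖ = 1}, evnorm (x - (ω : ℂ) • xhat)

/-- Operator (spectral) norm of a complex matrix w.r.t. Euclidean norms. -/
noncomputable def matOpNorm {ι κ : Type*} [Fintype ι] [Fintype κ] [DecidableEq κ]
    (M : Matrix ι κ ℂ) : ℝ :=
  ‖LinearMap.toContinuousLinearMap (Matrix.toEuclideanLin M)‖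

open scoped InnerProductSpace

lemma norm_phase (w : ℂ) : ‖phase w‖ = 1 := by
  unfold phase
  split_ifs with hw
  · exact norm_one
  · rw [norm_div, Complex.norm_real, norm_norm, div_self (norm_ne_zero_iff.mpr hw)]

section InnerProductSpace

variable {𝕜 E : Type*} [RCLike 𝕜] [NormedAddCommGroup E] [InnerProductSpace 𝕜 E]

lemma norm_add_sub_inner_smul_sq {a : E} (ha : ‖a‖ = 1) (h : E) (d : 𝕜) :
    ‖h + (d - ⟪a, h⟫_𝕜) • a‖ ^ 2 = ‖h‖ ^ 2 - ‖⟪a, h⟫_𝕜‖ ^ 2 + ‖d‖ ^ 2 := by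
  have haa : ⟪a, a⟫_𝕜 = 1 := by simp [inner_self_eq_norm_sq_to_K, ha]
  -- `h - ⟪a, h⟫ • a` is the component of `h` orthogonal to `a`
  have hdecomp : h + (d - ⟪a, h⟫_𝕜) • a = (h - ⟪a, h⟫_𝕜 • a) + d • a := by module
  have horth : ⟪h - ⟪a, h⟫_𝕜 • a, d • a⟫_𝕜 = 0 := by
    rw [inner_sub_left, inner_smul_left, inner_smul_right, inner_smul_right, haa,
      inner_conj_symm]
    ring
  have hproj : ‖h - ⟪a, h⟫_𝕜 • a‖ ^ 2 = ‖h‖ ^ 2 - ‖⟪a, h⟫_𝕜‖ ^ 2 := by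
    rw [@norm_sub_sq 𝕜, inner_smul_right, ← inner_conj_symm, RCLike.conj_mul, norm_smul, ha]
    norm_cast
    rw [RCLike.norm_conj]
    ring
  rw [hdecomp, @norm_add_sq 𝕜, horth, hproj, norm_smul, ha]
  simp

end InnerProductSpace

section Kaczmarz

variable {E : Type*} [NormedAddCommGroup E] [InnerProductSpace ℂ E]

lemma norm_sq_kaczmarz_step_sub_le {a : E} (ha : ‖a‖ = 1) (u v : E) {ζ ω : ℂ}
    (hζ : ‖ζ‖ = 1) (hω : ‖ω‖ = 1) :
    ‖u + ((‖⟪a, v⟫_ℂ‖ : ℂ) * ζ - ⟪a, u⟫_ℂ) • a - ω • v‖ ^ 2 ≤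
      ‖u - ω • v‖ ^ 2 - ‖⟪a, u - ω • v⟫_ℂ‖ ^ 2 + 4 * ‖⟪a, v⟫_ℂ‖ ^ 2 := by
  set d : ℂ := (‖⟪a, v⟫_ℂ‖ : ℂ) * ζ - ω * ⟪a, v⟫_ℂ
  have hstep : u + ((‖⟪a, v⟫_ℂ‖ : ℂ) * ζ - ⟪a, u⟫_ℂ) • a - ω • v
      = (u - ω • v) + (d - ⟪a, u - ω • v⟫_ℂ) • a := by
    rw [inner_sub_right, inner_smul_right]
    module
  -- both terms of `d` have modulus `‖⟪a, v⟫‖`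
  have hd : ‖d‖ ≤ 2 * ‖⟪a, v⟫_ℂ‖ := by
    refine (norm_sub_le _ _).trans_eq ?_
    rw [norm_mul, norm_mul, hζ, hω, Complex.norm_real, norm_norm]
    ring
  rw [hstep, norm_add_sub_inner_smul_sq ha]
  nlinarith [norm_nonneg d]

end Kaczmarz

section Coordinates

variable {n : ℕ}

lemma evnorm_eq_norm_toLp {ι : Type*} [Fintype ι] (v : ι → ℂ) :
    evnorm v = ‖(WithLp.toLp 2 v : EuclideanSpace ℂ ι)‖ := by
  simp [evnorm, EuclideanSpace.norm_eq]

lemma evnorm_sq {ι : Type*} [Fintype ι] (v : ι → ℂ) : evnorm v ^ 2 = ∑ i, ‖v i‖ ^ 2 :=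
  Real.sq_sqrt (Finset.sum_nonneg fun _ _ => sq_nonneg _)

lemma hinner_eq_inner_toLp (a x : Fin n → ℂ) :
    hinner a x = ⟪(WithLp.toLp 2 a : EuclideanSpace ℂ (Fin n)), WithLp.toLp 2 x⟫_ℂ := by
  simp [hinner, PiLp.inner_apply, mul_comm]

lemma pdist_le (x xhat : Fin n → ℂ) {ω : ℂ} (hω : ‖ω‖ = 1) :
    pdist x xhat ≤ evnorm (x - ω • xhat) :=
  ciInf_le (f := fun ω : {ω : ℂ // ‖ω‖ = 1} => evnorm (x - (ω : ℂ) • xhat))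
    ⟨0, Set.forall_mem_range.mpr fun _ => Real.sqrt_nonneg _⟩ ⟨ω, hω⟩

lemma exists_pdist_eq (x xhat : Fin n → ℂ) :
    ∃ ω : ℂ, ‖ω‖ = 1 ∧ pdist x xhat = evnorm (x - ω • xhat) := by
  have hcont : Continuous fun ω : ℂ => evnorm (x - ω • xhat) := by
    simp only [evnorm_eq_norm_toLp, WithLp.toLp_sub, WithLp.toLp_smul]
    fun_prop
  obtain ⟨ω₀, hω₀, hmin⟩ := (isCompact_sphere (0 : ℂ) 1).exists_isMinOn
    (NormedSpace.sphere_nonempty.mpr zero_le_one) hcont.continuousOn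
  rw [mem_sphere_zero_iff_norm] at hω₀
  have : Nonempty {ω : ℂ // ‖ω‖ = 1} := ⟨⟨1, norm_one⟩⟩
  exact ⟨ω₀, hω₀, (pdist_le x xhat hω₀).antisymm
    (le_ciInf fun ω => hmin (mem_sphere_zero_iff_norm.mpr ω.2))⟩

lemma pdist_kaczmarz_step_sq_le {a : Fin n → ℂ} (ha : evnorm a = 1) (x xhat : Fin n → ℂ)
    {ω : ℂ} (hω : ‖ω‖ = 1) :
    pdist (x + ((Real.sqrt (‖hinner a xhat‖ ^ 2) : ℂ) * phase (hinner a x) - hinner a x) • a)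
        xhat ^ 2 ≤
      evnorm (x - ω • xhat) ^ 2 - ‖hinner a (x - ω • xhat)‖ ^ 2 + 4 * ‖hinner a xhat‖ ^ 2 := by
  refine (pow_le_pow_left₀ (Real.iInf_nonneg fun _ => Real.sqrt_nonneg _)
    (pdist_le _ xhat hω) 2).trans ?_
  rw [Real.sqrt_sq (norm_nonneg _)]
  simp only [evnorm_eq_norm_toLp, hinner_eq_inner_toLp, WithLp.toLp_add, WithLp.toLp_sub,
    WithLp.toLp_smul] at ha ⊢
  exact norm_sq_kaczmarz_step_sub_le ha _ _ (norm_phase _) hω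

lemma sq_mul_evnorm_sq_le_sum {m : ℕ} {a : Fin m → Fin n → ℂ} {σ : ℝ} (hσ : 0 ≤ σ)
    (hsing : ∀ v : Fin n → ℂ, σ * evnorm v ≤ evnorm (fun r => hinner (a r) v))
    (v : Fin n → ℂ) :
    σ ^ 2 * evnorm v ^ 2 ≤ ∑ r, ‖hinner (a r) v‖ ^ 2 := by
  rw [← mul_pow, ← evnorm_sq]
  exact pow_le_pow_left₀ (mul_nonneg hσ (Real.sqrt_nonneg _)) (hsing v) 2

end Coordinates

/-- One-step expected error bound for the randomized simple Kaczmarz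
method for phase retrieval with uniform row selection. -/
theorem stmt10 {m n : ℕ} (a : Fin m → Fin n → ℂ) (ha : ∀ r, evnorm (a r) = 1)
    (xhat : Fin n → ℂ) (y : Fin m → ℝ)
    (hy : ∀ r, y r = ‖hinner (a r) xhat‖ ^ 2)
    (σ : ℝ) (hσ : 0 ≤ σ)
    (hsing : ∀ v : Fin n → ℂ, σ * evnorm v ≤ evnorm (fun r => hinner (a r) v))
    (x : Fin n → ℂ) :
    (1 / (m : ℝ)) * ∑ r, pdist
        (x + ((Real.sqrt (y r) : ℂ) * phase (hinner (a r) x) - hinner (a r) x) • a r)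
        xhat ^ 2 ≤
      (1 - σ ^ 2 / (m : ℝ)) * pdist x xhat ^ 2 + 4 * ⨆ r, y r := by
  -- every row is compared against the phase `ω` that is optimal for `x`
  obtain ⟨ω, hω, hx⟩ := exists_pdist_eq x xhat
  set h := x - ω • xhat
  set ymax := ⨆ r, y r
  have hrow : ∀ r, pdist
      (x + ((Real.sqrt (y r) : ℂ) * phase (hinner (a r) x) - hinner (a r) x) • a r) xhat ^ 2 ≤
      evnorm h ^ 2 - ‖hinner (a r) h‖ ^ 2 + 4 * ymax := fun r => by
    have hy_le : y r ≤ ymax := le_ciSup (Set.finite_range y).bddAbove r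
    have hstep := pdist_kaczmarz_step_sq_le (ha r) x xhat hω
    rw [← hy] at hstep
    linarith
  have hsum := Finset.sum_le_sum fun r (_ : r ∈ Finset.univ) => hrow r
  simp only [Finset.sum_add_distrib, Finset.sum_sub_distrib, Finset.sum_const,
    Finset.card_univ, Fintype.card_fin, nsmul_eq_mul] at hsum
  rcases m.eq_zero_or_pos with rfl | hm
  · simp only [Nat.cast_zero, div_zero, zero_mul, sub_zero, one_mul, ymax, Real.iSup_of_isEmpty,
      mul_zero, add_zero]
    positivity
  · have hm' : (0 : ℝ) < m := Nat.cast_pos.mpr hm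
    have hrhs : (m : ℝ) * ((1 - σ ^ 2 / m) * evnorm h ^ 2 + 4 * ymax)
        = m * evnorm h ^ 2 - σ ^ 2 * evnorm h ^ 2 + m * (4 * ymax) := by
      field_simp
    rw [one_div, inv_mul_le_iff₀ hm', hx, hrhs]
    linarith [sq_mul_evnorm_sq_le_sum hσ hsing h]
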